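/- Let U be a uniform and hollow right R-module, put M = U², U₁ = U × 0 and U₂ = 0 × U. If M is extending, then for any right R-module X, any homomorphism f : X → U₂ and any injective homomorphism g : X → U₁, one of the following holds: (i) there exists a homomorphism h : U₁ → U₂ such that f = h ∘ g; (ii) there exist a submodule N of U₁ containing the image of g and a surjective homomorphism h : N → U₂ such that f = h ∘ g. -/

import Mathlib

/-- A submodule `N` of `M` is *small* (superfluous) in `M` if `N + X ≠ M`
for every proper submodule `X` of `M`. -/
def IsSmallSubmodule {R M : Type*} [Ring R] [AddCommGroup M] [Module R M]
    (N : Submodule R M) : Prop :=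
  ∀ X : Submodule R M, X ≠ ⊤ → N ⊔ X ≠ ⊤

/-- A nonzero module `M` is *hollow* if every proper submodule of `M` is small in `M`. -/
def IsHollowModule (R M : Type*) [Ring R] [AddCommGroup M] [Module R M] : Prop :=
  Nontrivial M ∧ ∀ N : Submodule R M, N ≠ ⊤ → IsSmallSubmodule N

/-- A submodule `N` of `M` is *essential* in `M` if `N ∩ X ≠ 0`
for every nonzero submodule `X` of `M`. -/
def IsEssentialSubmodule {R M : Type*} [Ring R] [AddCommGroup M] [Module R M]
    (N : Submodule R M) : Prop :=
  ∀ X : Submodule R M, X ≠ ⊥ → N ⊓ X ≠ ⊥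

/-- A nonzero module `M` is *uniform* if every nonzero submodule of `M` is essential in `M`. -/
def IsUniformModule (R M : Type*) [Ring R] [AddCommGroup M] [Module R M] : Prop :=
  Nontrivial M ∧ ∀ N : Submodule R M, N ≠ ⊥ → IsEssentialSubmodule N

/-- `X` is a direct summand of `M`. -/
def IsDirectSummand {R M : Type*} [Ring R] [AddCommGroup M] [Module R M]
    (X : Submodule R M) : Prop :=
  ∃ Y : Submodule R M, IsCompl X Y

/-- A module `M` is *lifting* if for every submodule `N` of `M` there is a direct summand
`X` of `M` with `X ⊆ N` such that `N/X` is small in `M/X`. -/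
def IsLiftingModule (R M : Type*) [Ring R] [AddCommGroup M] [Module R M] : Prop :=
  ∀ N : Submodule R M, ∃ X : Submodule R M,
    X ≤ N ∧ IsDirectSummand X ∧ IsSmallSubmodule (N.map X.mkQ)

/-- A module `M` is *extending* if for every submodule `N` of `M` there is a direct summand
`X` of `M` such that `N` is essential in `X`. -/
def IsExtendingModule (R M : Type*) [Ring R] [AddCommGroup M] [Module R M] : Prop :=
  ∀ N : Submodule R M, ∃ X : Submodule R M,
    IsDirectSummand X ∧ N ≤ X ∧ ∀ Y : Submodule R M, Y ≤ X → Y ≠ ⊥ → N ⊓ Y ≠ ⊥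

/-- A module is *uniserial* if its submodules are linearly ordered by inclusion. -/
def IsUniserialModule (R M : Type*) [Ring R] [AddCommGroup M] [Module R M] : Prop :=
  ∀ A B : Submodule R M, A ≤ B ∨ B ≤ A

/-- An internal finite direct sum decomposition `M = ⨁ᵢ Fᵢ`. -/
def IsInternalDirectSum {R M ι : Type*} [Ring R] [AddCommGroup M] [Module R M]
    (F : ι → Submodule R M) : Prop :=
  (⨆ i, F i) = ⊤ ∧ ∀ i, Disjoint (F i) (⨆ j ∈ ({i}ᶜ : Set ι), F j)

/-- A module `M` satisfies the *finite internal exchange property* if for any direct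
summand `X` of `M` and any finite direct sum decomposition `M = M₁ ⊕ ⋯ ⊕ Mₙ` there are
submodules `Mᵢ' ⊆ Mᵢ` with `M = X ⊕ M₁' ⊕ ⋯ ⊕ Mₙ'`. -/
def SatisfiesFIEP (R M : Type*) [Ring R] [AddCommGroup M] [Module R M] : Prop :=
  ∀ (X : Submodule R M), IsDirectSummand X →
    ∀ (n : ℕ) (Mi : Fin n → Submodule R M), IsInternalDirectSum Mi →
      ∃ Mi' : Fin n → Submodule R M, (∀ i, Mi' i ≤ Mi i) ∧
        IsInternalDirectSum (fun o : Option (Fin n) => o.elim X Mi')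


/-!
Let `D` be a direct summand of `U × U` in which the graph `{(g x, f x)}` of `f ∘ g⁻¹` is
essential. Since `g` is injective the graph meets `0 × U` trivially, hence so does `D`, so `D`
is itself the graph of a homomorphism `h` defined on its first projection `N`, and `f = h ∘ g`.
In a hollow module a proper submodule is small, and a product of small submodules is small;
a small direct summand vanishes. So unless `D = 0` (then `f = 0`), one of the projections of `D`
is all of `U`: either `N = U`, giving (i), or `h` is onto, giving (ii).
-/

open Function LinearMap

namespace IsSmallSubmodule

variable {R M N : Type*} [Ring R] [AddCommGroup M] [Module R M] [AddCommGroup N] [Module R N]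

theorem eq_top_of_sup_eq_top {A X : Submodule R M} (hA : IsSmallSubmodule A) (h : A ⊔ X = ⊤) :
    X = ⊤ := by
  by_contra hX
  exact hA X hX h

theorem mono {A B : Submodule R M} (hB : IsSmallSubmodule B) (hAB : A ≤ B) :
    IsSmallSubmodule A := fun X hX h =>
  hB X hX (top_le_iff.mp (h ▸ sup_le_sup_right hAB X))

theorem sup {A B : Submodule R M} (hA : IsSmallSubmodule A) (hB : IsSmallSubmodule B) :
    IsSmallSubmodule (A ⊔ B) := fun X hX h =>
  hB X hX (hA.eq_top_of_sup_eq_top (by rw [← sup_assoc, h]))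

theorem map {A : Submodule R M} (hA : IsSmallSubmodule A) (f : M →ₗ[R] N) :
    IsSmallSubmodule (A.map f) := by
  intro Y hY h
  have hcomap : A ⊔ Y.comap f = ⊤ := by
    refine eq_top_iff.mpr fun m _ => ?_
    obtain ⟨_, ⟨a, ha, rfl⟩, y, hy, hm⟩ :=
      Submodule.mem_sup.mp (h.ge (Submodule.mem_top (x := f m)))
    have hma : f (m - a) = y := by rw [map_sub, ← hm, add_sub_cancel_left]
    rw [← add_sub_cancel a m]
    exact Submodule.add_mem_sup ha (by rw [Submodule.mem_comap, hma]; exact hy)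
  have hAY : A.map f ≤ Y :=
    Submodule.map_le_iff_le_comap.mpr ((hA.eq_top_of_sup_eq_top hcomap).symm ▸ le_top)
  exact hY (by rwa [sup_eq_right.mpr hAY] at h)

theorem prod {A : Submodule R M} {B : Submodule R N} (hA : IsSmallSubmodule A)
    (hB : IsSmallSubmodule B) : IsSmallSubmodule (A.prod B) := by
  have := (hA.map (inl R M N)).sup (hB.map (inr R M N))
  rwa [Submodule.map_inl, Submodule.map_inr, Submodule.prod_sup_prod, sup_bot_eq,
    bot_sup_eq] at this

theorem eq_bot_of_isCompl {D D' : Submodule R M} (hD : IsSmallSubmodule D) (h : IsCompl D D') :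
    D = ⊥ := by
  simpa [hD.eq_top_of_sup_eq_top h.sup_eq_top] using h.inf_eq_bot

end IsSmallSubmodule

theorem IsHollowModule.map_fst_eq_top_or_map_snd_eq_top {R U V : Type*} [Ring R]
    [AddCommGroup U] [Module R U] [AddCommGroup V] [Module R V]
    (hU : IsHollowModule R U) (hV : IsHollowModule R V) {D : Submodule R (U × V)}
    (hD : IsDirectSummand D) :
    D.map (fst R U V) = ⊤ ∨ D.map (snd R U V) = ⊤ ∨ D = ⊥ := by
  obtain ⟨D', hDD'⟩ := hD
  by_contra! h
  obtain ⟨hfst, hsnd, hbot⟩ := h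
  have hsmall : IsSmallSubmodule D := ((hU.2 _ hfst).prod (hV.2 _ hsnd)).mono
    fun p hp => ⟨Submodule.mem_map_of_mem hp, Submodule.mem_map_of_mem hp⟩
  exact hbot (hsmall.eq_bot_of_isCompl hDD')

theorem Submodule.disjoint_of_essential {R M : Type*} [Ring R] [AddCommGroup M] [Module R M]
    {N D K : Submodule R M}
    (hess : ∀ Y : Submodule R M, Y ≤ D → Y ≠ ⊥ → N ⊓ Y ≠ ⊥)
    (hNK : Disjoint N K) : Disjoint D K := by
  rw [disjoint_iff]
  by_contra h
  exact hess _ inf_le_left h (disjoint_iff.mp (hNK.mono_right inf_le_right))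

theorem LinearMap.disjoint_range_prod_ker_fst {R X U V : Type*} [Ring R]
    [AddCommGroup X] [Module R X] [AddCommGroup U] [Module R U] [AddCommGroup V] [Module R V]
    {g : X →ₗ[R] U} (hg : Injective g) (f : X →ₗ[R] V) :
    Disjoint (range (g.prod f)) (ker (fst R U V)) := by
  rw [Submodule.disjoint_def]
  rintro _ ⟨x, rfl⟩ hx
  rw [hg (show g x = g 0 by simpa using hx), map_zero]

theorem exists_factor_or_surjective_factor_of_isExtendingModule_prod {R X U V : Type*} [Ring R]
    [AddCommGroup X] [Module R X] [AddCommGroup U] [Module R U] [AddCommGroup V] [Module R V]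
    (hU : IsHollowModule R U) (hV : IsHollowModule R V) (hext : IsExtendingModule R (U × V))
    (f : X →ₗ[R] V) (g : X →ₗ[R] U) (hg : Injective g) :
    (∃ h : U →ₗ[R] V, f = h ∘ₗ g) ∨
      ∃ (N : Submodule R U) (hN : ∀ x, g x ∈ N) (h : N →ₗ[R] V),
        Surjective h ∧ f = h ∘ₗ g.codRestrict N hN := by
  obtain ⟨D, hD, hle, hess⟩ := hext (range (g.prod f))
  have hgraph : ∀ p ∈ D, p.1 = 0 → p.2 = 0 := fun p hp hp1 => by
    rw [Submodule.disjoint_def.mp (Submodule.disjoint_of_essential hess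
      (disjoint_range_prod_ker_fst hg f)) p hp hp1, Prod.snd_zero]
  set h := D.toLinearPMap
  have hfg : ∀ x, ∃ y : h.domain, (y : U) = g x ∧ h y = f x := fun x =>
    h.mem_graph_iff.mp (D.toLinearPMap_graph_eq hgraph ▸ hle ⟨x, rfl⟩)
  rcases hU.map_fst_eq_top_or_map_snd_eq_top hV hD with hdom | hrange | hbot
  · refine .inl ⟨h.toFun ∘ₗ (LinearEquiv.ofTop h.domain hdom).symm.toLinearMap,
      ext fun x => ?_⟩
    obtain ⟨y, hy, hfy⟩ := hfg x
    rw [LinearMap.comp_apply, LinearMap.comp_apply, ← hfy, ← hy]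
    exact congrArg h (Subtype.ext (LinearEquiv.coe_ofTop_symm_apply h.domain (y : U)).symm)
  · refine .inr ⟨h.domain, fun x => ?_, h.toFun, ?_, ext fun x => ?_⟩
    · obtain ⟨y, hy, -⟩ := hfg x
      exact hy ▸ y.2
    · exact range_eq_top.mp (by rw [D.toLinearPMap_range hgraph, hrange])
    · obtain ⟨y, hy, hfy⟩ := hfg x
      rw [← hfy, LinearMap.comp_apply]
      exact congrArg h (Subtype.ext hy)
  · refine .inl ⟨0, ext fun x => ?_⟩
    have hx : (g x, f x) ∈ D := hle ⟨x, rfl⟩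
    rw [hbot, Submodule.mem_bot, Prod.mk_eq_zero] at hx
    simp [hx.2]

theorem stmt_7_general {R U : Type*} [Ring R] [AddCommGroup U] [Module R U]
    (hH : IsHollowModule R U) (hext : IsExtendingModule R (U × U)) :
    ∀ (X : Type*) [AddCommGroup X] [Module R X]
      (f : X →ₗ[R] ↥(Submodule.snd R U U)) (g : X →ₗ[R] ↥(Submodule.fst R U U)),
      Function.Injective g →
        (∃ h : ↥(Submodule.fst R U U) →ₗ[R] ↥(Submodule.snd R U U), f = h ∘ₗ g) ∨
        (∃ (N : Submodule R ↥(Submodule.fst R U U)) (hN : ∀ x, g x ∈ N)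
            (h : ↥N →ₗ[R] ↥(Submodule.snd R U U)),
          Function.Surjective h ∧ f = h ∘ₗ LinearMap.codRestrict N g hN) := by
  intro X _ _ f g hg
  set e₁ := Submodule.fstEquiv R U U
  set e₂ := Submodule.sndEquiv R U U
  rcases exists_factor_or_surjective_factor_of_isExtendingModule_prod hH hH hext
      (e₂.toLinearMap ∘ₗ f) (e₁.toLinearMap ∘ₗ g) (e₁.injective.comp hg)
    with ⟨h, hfg⟩ | ⟨N, hN, h, hsurj, hfg⟩
  · refine .inl ⟨e₂.symm.toLinearMap ∘ₗ h ∘ₗ e₁.toLinearMap, ext fun x => ?_⟩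
    exact e₂.eq_symm_apply.mpr (LinearMap.congr_fun hfg x)
  · refine .inr ⟨N.comap e₁.toLinearMap, hN,
      e₂.symm.toLinearMap ∘ₗ h ∘ₗ (e₁.ofSubmodule' N).toLinearMap,
      e₂.symm.surjective.comp (hsurj.comp (e₁.ofSubmodule' N).surjective), ext fun x => ?_⟩
    exact e₂.eq_symm_apply.mpr (LinearMap.congr_fun hfg x)

/-- Let `U` be uniform and hollow, `M = U²`, `U₁ = U × 0`, `U₂ = 0 × U`. If `M` is
extending, then for any module `X`, any homomorphism `f : X → U₂` and any injective
homomorphism `g : X → U₁`, either (i) there is `h : U₁ → U₂` with `f = h ∘ g`, or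
(ii) there are a submodule `N` of `U₁` containing the image of `g` and a surjective
homomorphism `h : N → U₂` with `f = h ∘ g`. -/
theorem stmt_7 {R U : Type*} [Ring R] [AddCommGroup U] [Module R U]
    (hU : IsUniformModule R U) (hH : IsHollowModule R U)
    (hext : IsExtendingModule R (U × U)) :
    ∀ (X : Type*) [AddCommGroup X] [Module R X]
      (f : X →ₗ[R] ↥(Submodule.snd R U U)) (g : X →ₗ[R] ↥(Submodule.fst R U U)),
      Function.Injective g →
        (∃ h : ↥(Submodule.fst R U U) →ₗ[R] ↥(Submodule.snd R U U), f = h ∘ₗ g) ∨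
        (∃ (N : Submodule R ↥(Submodule.fst R U U)) (hN : ∀ x, g x ∈ N)
            (h : ↥N →ₗ[R] ↥(Submodule.snd R U U)),
          Function.Surjective h ∧ f = h ∘ₗ LinearMap.codRestrict N g hN) :=
  stmt_7_general hH hext
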